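/- Every Tinhofer graph is refinable: if Tinhofer's individualization-refinement algorithm gives the correct isomorphism answer on input (G, H) for every graph H and all possible choices of individualized vertices, then the stable partition Π_G of G equals the orbit partition of the automorphism group Aut(G). -/

import Mathlib

namespace ColorRef

variable {V W : Type}

/-- `crRel G c i u v` means vertices `u` and `v` get the same color in round `i`
of color refinement on `G` with initial coloring `c`. -/
def crRel (G : SimpleGraph V) {α : Type} (c : V → α) : ℕ → V → V → Prop
  | 0 => fun u v => c u = c v
  | (i + 1) => fun u v => crRel G c i u v ∧
      ∀ w : V, {a : V | G.Adj u a ∧ crRel G c i a w}.ncard =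
               {a : V | G.Adj v a ∧ crRel G c i a w}.ncard

/-- `u` and `v` get the same color in the stable coloring. -/
def stableRel (G : SimpleGraph V) {α : Type} (c : V → α) (u v : V) : Prop :=
  ∀ i : ℕ, crRel G c i u v

/-- `X` is a cell of the stable partition of `(G, c)`. -/
def IsCell (G : SimpleGraph V) {α : Type} (c : V → α) (X : Set V) : Prop :=
  ∃ u : V, X = {v : V | stableRel G c u v}

/-- The multisets of round-`i` colors on the two sides of the disjoint union `G ⊕g H`
coincide for every `i`, i.e. color refinement does not distinguish `G` and `H`. -/
def crIndist (G : SimpleGraph V) (cG : V → ℕ) (H : SimpleGraph W) (cH : W → ℕ) : Prop :=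
  ∀ (i : ℕ) (w : V ⊕ W),
    {u : V | crRel (G ⊕g H) (Sum.elim cG cH) i (Sum.inl u) w}.ncard =
    {v : W | crRel (G ⊕g H) (Sum.elim cG cH) i (Sum.inr v) w}.ncard

/-- `G` (with coloring `cG`) is amenable: any finite colored graph `H` that color
refinement fails to distinguish from `G` is color-preservingly isomorphic to `G`. -/
def Amenable (G : SimpleGraph V) (cG : V → ℕ) : Prop :=
  ∀ (W : Type) (_ : Fintype W) (H : SimpleGraph W) (cH : W → ℕ),
    crIndist G cG H cH → ∃ φ : G ≃g H, ∀ v : V, cH (φ v) = cG v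

/-! ### Induced subgraphs on cells and between cells -/

def CellEmpty (G : SimpleGraph V) (X : Set V) : Prop := ∀ u ∈ X, ∀ v ∈ X, ¬ G.Adj u v

def CellComplete (G : SimpleGraph V) (X : Set V) : Prop :=
  ∀ u ∈ X, ∀ v ∈ X, u ≠ v → G.Adj u v

/-- `G[X]` is a perfect matching `mK₂` on `X`. -/
def CellMatching (G : SimpleGraph V) (X : Set V) : Prop :=
  ∀ u ∈ X, {v : V | v ∈ X ∧ G.Adj u v}.ncard = 1

/-- `G[X]` is the complement of a perfect matching on `X`. -/
def CellCoMatching (G : SimpleGraph V) (X : Set V) : Prop :=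
  ∀ u ∈ X, {v : V | v ∈ X ∧ v ≠ u ∧ ¬ G.Adj u v}.ncard = 1

/-- `G[X]` is the 5-cycle (a 2-regular graph on 5 vertices). -/
def CellC5 (G : SimpleGraph V) (X : Set V) : Prop :=
  X.ncard = 5 ∧ ∀ u ∈ X, {v : V | v ∈ X ∧ G.Adj u v}.ncard = 2

/-- Condition A. -/
def CondA (G : SimpleGraph V) {α : Type} (c : V → α) : Prop :=
  ∀ X : Set V, IsCell G c X →
    CellEmpty G X ∨ CellComplete G X ∨ CellMatching G X ∨ CellCoMatching G X ∨ CellC5 G X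

def BipEmpty (G : SimpleGraph V) (X Y : Set V) : Prop := ∀ u ∈ X, ∀ v ∈ Y, ¬ G.Adj u v

def BipComplete (G : SimpleGraph V) (X Y : Set V) : Prop := ∀ u ∈ X, ∀ v ∈ Y, G.Adj u v

/-- `G[X,Y]` is a disjoint union of stars `sK_{1,t}` with centers `X` and leaves `Y`. -/
def BipStars (G : SimpleGraph V) (X Y : Set V) : Prop :=
  (∀ v ∈ Y, {u : V | u ∈ X ∧ G.Adj u v}.ncard = 1) ∧
  (∃ t : ℕ, ∀ u ∈ X, {v : V | v ∈ Y ∧ G.Adj u v}.ncard = t)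

/-- `G[X,Y]` is the bipartite complement of a disjoint union of stars with centers `X`. -/
def BipCoStars (G : SimpleGraph V) (X Y : Set V) : Prop :=
  (∀ v ∈ Y, {u : V | u ∈ X ∧ ¬ G.Adj u v}.ncard = 1) ∧
  (∃ t : ℕ, ∀ u ∈ X, {v : V | v ∈ Y ∧ ¬ G.Adj u v}.ncard = t)

/-- Condition B. -/
def CondB (G : SimpleGraph V) {α : Type} (c : V → α) : Prop :=
  ∀ X Y : Set V, IsCell G c X → IsCell G c Y → X ≠ Y →
    BipEmpty G X Y ∨ BipComplete G X Y ∨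
    BipStars G X Y ∨ BipStars G Y X ∨ BipCoStars G X Y ∨ BipCoStars G Y X

/-- A cell is heterogeneous if the graph it induces is neither complete nor empty. -/
def Hetero (G : SimpleGraph V) (X : Set V) : Prop :=
  ¬ CellEmpty G X ∧ ¬ CellComplete G X

/-- `{X, Y}` is an anisotropic edge of the cell graph. -/
def AnisoEdge (G : SimpleGraph V) {α : Type} (c : V → α) (X Y : Set V) : Prop :=
  IsCell G c X ∧ IsCell G c Y ∧ X ≠ Y ∧ ¬ BipEmpty G X Y ∧ ¬ BipComplete G X Y

/-- An anisotropic path in the cell graph, given as the list of its cells. -/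
def AnisoPath (G : SimpleGraph V) {α : Type} (c : V → α) (L : List (Set V)) : Prop :=
  (∀ X ∈ L, IsCell G c X) ∧ L.Nodup ∧ L.Chain' (AnisoEdge G c)

/-- Condition C: no uniform anisotropic path connects two heterogeneous cells. -/
def CondC (G : SimpleGraph V) {α : Type} (c : V → α) : Prop :=
  ¬ ∃ (X Y : Set V) (L : List (Set V)) (k : ℕ),
      AnisoPath G c (X :: (L ++ [Y])) ∧
      (∀ Z ∈ X :: (L ++ [Y]), Z.ncard = k) ∧
      Hetero G X ∧ Hetero G Y

/-- Condition D: the cell graph has no uniform anisotropic cycle. -/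
def CondD (G : SimpleGraph V) {α : Type} (c : V → α) : Prop :=
  ¬ ∃ (X : Set V) (L : List (Set V)) (k : ℕ),
      3 ≤ (X :: L).length ∧
      AnisoPath G c (X :: L) ∧
      List.Chain' (AnisoEdge G c) ((X :: L) ++ [X]) ∧
      (∀ Z ∈ X :: L, Z.ncard = k)

/-- Condition E: no anisotropic path `X Y₁ … Y_l Z` with `|X| < |Y₁| = … = |Y_l| > |Z|`
and no anisotropic cycle `X Y₁ … Y_l X` with `|X| < |Y₁| = … = |Y_l|`. -/
def CondE (G : SimpleGraph V) {α : Type} (c : V → α) : Prop :=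
  (¬ ∃ (X Z : Set V) (Ys : List (Set V)) (k : ℕ),
      Ys ≠ [] ∧
      AnisoPath G c (X :: (Ys ++ [Z])) ∧
      (∀ Y ∈ Ys, Y.ncard = k) ∧ X.ncard < k ∧ Z.ncard < k) ∧
  (¬ ∃ (X : Set V) (Ys : List (Set V)) (k : ℕ),
      2 ≤ Ys.length ∧
      AnisoPath G c (X :: Ys) ∧
      List.Chain' (AnisoEdge G c) ((X :: Ys) ++ [X]) ∧
      (∀ Y ∈ Ys, Y.ncard = k) ∧ X.ncard < k)

/-- Condition F: no anisotropic path `X Y₁ … Y_l` with `|X| < |Y₁| = … = |Y_l|`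
whose last cell `Y_l` is heterogeneous. -/
def CondF (G : SimpleGraph V) {α : Type} (c : V → α) : Prop :=
  ¬ ∃ (X : Set V) (Ys : List (Set V)) (Yl : Set V) (k : ℕ),
      Ys ≠ [] ∧
      AnisoPath G c (X :: Ys) ∧
      (∀ Y ∈ Ys, Y.ncard = k) ∧ X.ncard < k ∧
      Ys.getLast? = some Yl ∧ Hetero G Yl

/-- The type of cells of the stable partition. -/
def Cell (G : SimpleGraph V) {α : Type} (c : V → α) : Type := {X : Set V // IsCell G c X}

/-- The graph on the cells of `Π_G` formed by the anisotropic edges of the cell graph;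
its connected components are the anisotropic components of `C(G)`. -/
def anisoGraph (G : SimpleGraph V) {α : Type} (c : V → α) : SimpleGraph (Cell G c) where
  Adj A B := AnisoEdge G c A.val B.val
  symm := by
    constructor
    rintro A B ⟨h1, h2, h3, h4, h5⟩
    refine ⟨h2, h1, Ne.symm h3, fun h => h4 ?_, fun h => h5 ?_⟩
    · exact fun u hu v hv hadj => h v hv u hu hadj.symm
    · exact fun u hu v hv => (h v hv u hu).symm
  loopless := ⟨fun A h => h.2.2.1 rfl⟩

/-- Condition G: every anisotropic component is a tree, and rooting it at any cell `R`
of minimum cardinality in its component, `|X| ≤ |Y|` along edges directed away from `R`. -/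
def CondG (G : SimpleGraph V) {α : Type} (c : V → α) : Prop :=
  (anisoGraph G c).IsAcyclic ∧
  ∀ R X Y : Cell G c,
    (∀ Z : Cell G c, (anisoGraph G c).Reachable R Z → R.val.ncard ≤ Z.val.ncard) →
    (anisoGraph G c).Reachable R X →
    (anisoGraph G c).Adj X Y →
    (anisoGraph G c).dist R Y = (anisoGraph G c).dist R X + 1 →
    X.val.ncard ≤ Y.val.ncard

/-- Condition H: every anisotropic component contains at most one heterogeneous cell,
and such a cell has minimum cardinality within its component. -/
def CondH (G : SimpleGraph V) {α : Type} (c : V → α) : Prop :=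
  (∀ X Y : Cell G c, Hetero G X.val → Hetero G Y.val →
      (anisoGraph G c).Reachable X Y → X = Y) ∧
  (∀ X Z : Cell G c, Hetero G X.val →
      (anisoGraph G c).Reachable X Z → X.val.ncard ≤ Z.val.ncard)

/-! ### Matrices, fractional automorphisms and compactness -/

open Classical in
/-- The real adjacency matrix of `G`. -/
noncomputable def adjMat (G : SimpleGraph V) : Matrix V V ℝ :=
  Matrix.of fun u v => if G.Adj u v then (1 : ℝ) else 0

open Classical in
/-- The permutation matrix of a permutation `σ`. -/
noncomputable def permMat (σ : Equiv.Perm V) : Matrix V V ℝ :=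
  Matrix.of fun i j => if σ j = i then (1 : ℝ) else 0

def IsDoublyStochastic [Fintype V] (X : Matrix V V ℝ) : Prop :=
  (∀ i j, 0 ≤ X i j) ∧ (∀ i, ∑ j, X i j = 1) ∧ (∀ j, ∑ i, X i j = 1)

def IsAutomorphism (G : SimpleGraph V) (σ : Equiv.Perm V) : Prop :=
  ∀ u v : V, G.Adj (σ u) (σ v) ↔ G.Adj u v

/-- `X` is a convex combination of permutation matrices of automorphisms of `G`. -/
def IsConvexCombOfAut [Fintype V] (G : SimpleGraph V) (X : Matrix V V ℝ) : Prop :=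
  ∃ (s : Finset (Equiv.Perm V)) (w : Equiv.Perm V → ℝ),
    (∀ σ ∈ s, IsAutomorphism G σ) ∧ (∀ σ ∈ s, 0 ≤ w σ) ∧
    (∑ σ ∈ s, w σ) = 1 ∧ X = ∑ σ ∈ s, w σ • permMat σ

/-- `G` is compact: the polytope of fractional automorphisms of `G` is the convex hull
of the permutation matrices of automorphisms of `G`. -/
def CompactGraph [Fintype V] (G : SimpleGraph V) : Prop :=
  ∀ X : Matrix V V ℝ, IsDoublyStochastic X → adjMat G * X = X * adjMat G →
    IsConvexCombOfAut G X

/-! ### Equitable partitions, Godsil, Tinhofer, refinable, discrete, unigraphs -/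

/-- The partition given by the classes of the equivalence `r` is equitable. -/
def Equitable (G : SimpleGraph V) (r : V → V → Prop) : Prop :=
  ∀ u v w : V, r u v →
    {a : V | G.Adj u a ∧ r a w}.ncard = {a : V | G.Adj v a ∧ r a w}.ncard

/-- The partition given by `r` is the orbit partition of a subgroup of `Aut(G)`. -/
def IsOrbitPartition (G : SimpleGraph V) (r : V → V → Prop) : Prop :=
  ∃ S : Subgroup (Equiv.Perm V), (∀ σ ∈ S, IsAutomorphism G σ) ∧
    (∀ u v : V, r u v ↔ ∃ σ ∈ S, σ u = v)

/-- `G` is a Godsil graph. -/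
def Godsil (G : SimpleGraph V) : Prop :=
  ∀ r : V → V → Prop, Equivalence r → Equitable G r → IsOrbitPartition G r

open Classical in
/-- The coloring of the disjoint union after individualizing the pairs in `F`:
the `j`-th individualized pair gets fresh color `some j`, all other vertices keep
their (uniform) original color `none`. -/
noncomputable def tinColor (F : List (V × W)) : V ⊕ W → Option ℕ
  | Sum.inl u => F.findIdx? (fun p => decide (p.1 = u))
  | Sum.inr v => F.findIdx? (fun p => decide (p.2 = v))

/-- The stable coloring relation on `G ⊕g H` after individualizing the pairs in `F`. -/
def tinRel (G : SimpleGraph V) (H : SimpleGraph W) (F : List (V × W)) :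
    (V ⊕ W) → (V ⊕ W) → Prop :=
  stableRel (G ⊕g H) (tinColor F)

/-- The multisets of stable colors on the two sides agree after individualizing `F`. -/
def tinIndist (G : SimpleGraph V) (H : SimpleGraph W) (F : List (V × W)) : Prop :=
  ∀ w : V ⊕ W,
    {u : V | tinRel G H F (Sum.inl u) w}.ncard =
    {v : W | tinRel G H F (Sum.inr v) w}.ncard

/-- The pair `p` is a legal individualization choice at the stage reached after `F`. -/
def ValidStep (G : SimpleGraph V) (H : SimpleGraph W) (F : List (V × W)) (p : V × W) : Prop :=
  tinIndist G H F ∧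
  tinRel G H F (Sum.inl p.1) (Sum.inr p.2) ∧
  2 ≤ {u' : V | tinRel G H F (Sum.inl u') (Sum.inl p.1)}.ncard ∧
  2 ≤ {v' : W | tinRel G H F (Sum.inr v') (Sum.inr p.2)}.ncard

/-- `F` is a legal sequence of individualization choices of Tinhofer's algorithm. -/
def ValidRun (G : SimpleGraph V) (H : SimpleGraph W) (F : List (V × W)) : Prop :=
  ∀ j : Fin F.length, ValidStep G H (F.take j.val) (F.get j)

/-- After `F`, all stable color classes are singletons in `G` and in `H`. -/
def AllSingletons (G : SimpleGraph V) (H : SimpleGraph W) (F : List (V × W)) : Prop :=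
  (∀ u u' : V, tinRel G H F (Sum.inl u) (Sum.inl u') → u = u') ∧
  (∀ v v' : W, tinRel G H F (Sum.inr v) (Sum.inr v') → v = v')

/-- After `F`, Tinhofer's algorithm stops. -/
def TinTerminal (G : SimpleGraph V) (H : SimpleGraph W) (F : List (V × W)) : Prop :=
  ¬ tinIndist G H F ∨ AllSingletons G H F

/-- After `F`, Tinhofer's algorithm outputs "isomorphic": the color multisets agree,
all classes are singletons, and the color-matching map is an isomorphism. -/
def TinOutputIso (G : SimpleGraph V) (H : SimpleGraph W) (F : List (V × W)) : Prop :=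
  tinIndist G H F ∧ AllSingletons G H F ∧
  (∀ (u u' : V) (v v' : W), tinRel G H F (Sum.inl u) (Sum.inr v) →
     tinRel G H F (Sum.inl u') (Sum.inr v') → (G.Adj u u' ↔ H.Adj v v'))

/-- `G` is a Tinhofer graph: for every finite `H` and every legal complete run of
Tinhofer's individualization-refinement algorithm, the output is correct. -/
def Tinhofer (G : SimpleGraph V) : Prop :=
  ∀ (W : Type) (_ : Fintype W) (H : SimpleGraph W) (F : List (V × W)),
    ValidRun G H F → TinTerminal G H F →
    (TinOutputIso G H F ↔ Nonempty (G ≃g H))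

/-- `G` is refinable: its stable partition is the orbit partition of `Aut(G)`. -/
def Refinable (G : SimpleGraph V) : Prop :=
  ∀ u v : V, stableRel G (fun _ => (0 : ℕ)) u v ↔
    ∃ σ : Equiv.Perm V, IsAutomorphism G σ ∧ σ u = v

/-- `G` is discrete: the stable partition consists of singletons. -/
def Discrete (G : SimpleGraph V) : Prop :=
  ∀ u v : V, stableRel G (fun _ => (0 : ℕ)) u v → u = v

/-- `G` is a unigraph: it is determined up to isomorphism by its degree sequence. -/
def Unigraph (G : SimpleGraph V) : Prop :=
  ∀ (W : Type) (_ : Fintype W) (H : SimpleGraph W),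
    (∃ e : V ≃ W, ∀ v : V, {w : W | H.Adj (e v) w}.ncard = {u : V | G.Adj v u}.ncard) →
    Nonempty (G ≃g H)

/-! ### Concrete graphs -/

/-- The cycle graph on `n` vertices. -/
def cycleG (n : ℕ) : SimpleGraph (Fin n) :=
  SimpleGraph.fromRel (fun u v => (u.val + 1) % n = v.val)

/-- The Petersen graph as the Kneser graph `K(5,2)`. -/
def petersen : SimpleGraph {s : Finset (Fin 5) // s.card = 2} where
  Adj a b := Disjoint a.val b.val
  symm := ⟨fun _ _ h => h.symm⟩
  loopless := by
    constructor
    intro a h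
    have h' : Disjoint a.val a.val := h
    rw [disjoint_self] at h'
    have h2 := a.2
    rw [h'] at h2
    simp at h2

/-- The Johnson graph `J(n,2)`. -/
def johnson (n : ℕ) : SimpleGraph {s : Finset (Fin n) // s.card = 2} where
  Adj a b := (a.val ∩ b.val).card = 1
  symm := by
    constructor
    intro a b h
    have h' : (a.val ∩ b.val).card = 1 := h
    show (b.val ∩ a.val).card = 1
    rwa [Finset.inter_comm]
  loopless := by
    constructor
    intro a h
    have h' : (a.val ∩ a.val).card = 1 := h
    rw [Finset.inter_self, a.2] at h'
    omega

/-- The cell (as an element of the cell type) containing vertex `u`. -/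
def vcell (G : SimpleGraph V) {α : Type} (c : V → α) (u : V) : Cell G c :=
  ⟨{v : V | stableRel G c u v}, ⟨u, rfl⟩⟩

/-- `u` and `v` lie in cells of the same anisotropic component. -/
def SameAnisoComp (G : SimpleGraph V) {α : Type} (c : V → α) (u v : V) : Prop :=
  (anisoGraph G c).Reachable (vcell G c u) (vcell G c v)


/-!
Automorphisms preserve every round of color refinement, so each orbit of `Aut(G)` lies in a
stable class. Conversely, let `u ≠ v` share a stable color. The stable coloring of `G + G`
restricts to that of `G` on each copy and is invariant under swapping the copies, so
individualizing `u` in the first copy and `v` in the second is a legal first move of Tinhofer's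
algorithm on `(G, G)`. Every legal move individualizes a vertex of `G` not individualized
before, so the run can be continued until the algorithm stops. Since `G ≅ G`, the algorithm
must answer "isomorphic", and the bijection matching equal colors is then an automorphism of
`G` sending `u` to `v`.
-/

theorem _root_.Equivalence.rel_congr_left {X : Type} {r : X → X → Prop} (hr : Equivalence r)
    {a b c : X} (h : r a b) : r a c ↔ r b c :=
  ⟨hr.trans (hr.symm h), hr.trans h⟩

theorem _root_.Equivalence.rel_congr_right {X : Type} {r : X → X → Prop} (hr : Equivalence r)
    {a b c : X} (h : r b c) : r a b ↔ r a c :=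
  ⟨fun h' => hr.trans h' h, fun h' => hr.trans h' (hr.symm h)⟩

section ColorRefinement

variable {α β : Type}

theorem crRel_equivalence (G : SimpleGraph V) (c : V → α) : ∀ i, Equivalence (crRel G c i)
  | 0 => ⟨fun _ => rfl, Eq.symm, Eq.trans⟩
  | i + 1 =>
    have hi := crRel_equivalence G c i
    ⟨fun u => ⟨hi.refl u, fun _ => rfl⟩, fun h => ⟨hi.symm h.1, fun w => (h.2 w).symm⟩,
      fun h h' => ⟨hi.trans h.1 h'.1, fun w => (h.2 w).trans (h'.2 w)⟩⟩

theorem stableRel_equivalence (G : SimpleGraph V) (c : V → α) : Equivalence (stableRel G c) :=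
  ⟨fun u i => (crRel_equivalence G c i).refl u,
    fun h i => (crRel_equivalence G c i).symm (h i),
    fun h h' i => (crRel_equivalence G c i).trans (h i) (h' i)⟩

theorem crRel_congr_coloring {G : SimpleGraph V} {c : V → α} {c' : V → β}
    (hc : ∀ x y, c x = c y ↔ c' x = c' y) : ∀ i, crRel G c i = crRel G c' i
  | 0 => funext₂ fun x y => propext (hc x y)
  | i + 1 => by ext u v; simp only [crRel, crRel_congr_coloring hc i]

theorem ncard_adj_and_rel_map {G : SimpleGraph V} {H : SimpleGraph W} (φ : G ≃g H)
    {r : V → V → Prop} {s : W → W → Prop} (hrs : ∀ a b, s (φ a) (φ b) ↔ r a b) (u w : V) :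
    {a | H.Adj (φ u) a ∧ s a (φ w)}.ncard = {a | G.Adj u a ∧ r a w}.ncard := by
  rw [← Set.ncard_image_of_injective _ φ.injective]
  congr 1
  ext b
  obtain ⟨a, rfl⟩ := φ.surjective b
  simp [hrs, φ.map_adj_iff]

theorem crRel_map_iff {G : SimpleGraph V} {H : SimpleGraph W} (φ : G ≃g H) {c : V → α}
    {c' : W → α} (hc : ∀ x, c' (φ x) = c x) :
    ∀ i u v, crRel H c' i (φ u) (φ v) ↔ crRel G c i u v
  | 0, u, v => by simp only [crRel, hc]
  | i + 1, u, v => by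
    simp only [crRel, crRel_map_iff φ hc i u v]
    refine and_congr_right fun _ => φ.toEquiv.forall_congr_right.symm.trans ?_
    refine forall_congr' fun w => ?_
    rw [← ncard_adj_and_rel_map φ (crRel_map_iff φ hc i) u w,
      ← ncard_adj_and_rel_map φ (crRel_map_iff φ hc i) v w]
    rfl

theorem crRel_apply_self {G : SimpleGraph V} (φ : G ≃g G) {c : V → α}
    (hc : ∀ x, c (φ x) = c x) : ∀ i u, crRel G c i u (φ u)
  | 0, u => (hc u).symm
  | i + 1, u => ⟨crRel_apply_self φ hc i u, fun w => by
      obtain ⟨x, rfl⟩ := φ.surjective w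
      rw [ncard_adj_and_rel_map φ (crRel_map_iff φ hc i)]
      simp only [(crRel_equivalence G c i).rel_congr_right (crRel_apply_self φ hc i x)]⟩

theorem stableRel_apply_self {G : SimpleGraph V} (φ : G ≃g G) {c : V → α}
    (hc : ∀ x, c (φ x) = c x) (u : V) : stableRel G c u (φ u) :=
  fun i => crRel_apply_self φ hc i u

theorem ncard_sum_adj_inl {G : SimpleGraph V} {H : SimpleGraph W} (a : V) (P : V ⊕ W → Prop) :
    {z | (G ⊕g H).Adj (.inl a) z ∧ P z}.ncard = {a' | G.Adj a a' ∧ P (.inl a')}.ncard := by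
  rw [← Set.ncard_image_of_injective {a' | G.Adj a a' ∧ P (.inl a')} Sum.inl_injective]
  congr 1
  refine Set.ext fun z => ?_
  cases z <;> simp

theorem crRel_sum_inl_iff {G : SimpleGraph V} {H : SimpleGraph W} {c : V ⊕ W → α} :
    ∀ i a b, crRel (G ⊕g H) c i (.inl a) (.inl b) ↔ crRel G (c ∘ Sum.inl) i a b
  | 0, _, _ => Iff.rfl
  | i + 1, a, b => by
    simp only [crRel, ncard_sum_adj_inl, ← crRel_sum_inl_iff (H := H) i, Sum.forall]
    refine and_congr_right fun _ => ⟨And.left, fun h => ⟨h, fun w => ?_⟩⟩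
    by_cases hw : ∃ w', crRel (G ⊕g H) c i (.inl w') (.inr w)
    · obtain ⟨w', hw'⟩ := hw
      simp only [← (crRel_equivalence _ c i).rel_congr_right hw']
      exact h w'
    · -- the class of `.inr w` contains no left vertex, so both counts vanish
      push Not at hw
      simp [hw]

theorem stableRel_sum_inl_iff {G : SimpleGraph V} {H : SimpleGraph W} {c : V ⊕ W → α}
    {a b : V} :
    stableRel (G ⊕g H) c (.inl a) (.inl b) ↔ stableRel G (c ∘ Sum.inl) a b :=
  forall_congr' fun i => crRel_sum_inl_iff i a b

end ColorRefinement

section Tinhofer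

variable {G : SimpleGraph V} {H : SimpleGraph W} {F : List (V × W)}

theorem tinRel_equivalence (G : SimpleGraph V) (H : SimpleGraph W) (F : List (V × W)) :
    Equivalence (tinRel G H F) :=
  stableRel_equivalence _ _

theorem tinColor_nil (x : V ⊕ W) : tinColor ([] : List (V × W)) x = none := by
  cases x <;> rfl

theorem tinColor_inl_eq_some {u : V} {j : ℕ} (h : tinColor F (.inl u) = some j) :
    ∃ hj : j < F.length, F[j].1 = u := by
  obtain ⟨hj, hp, -⟩ := List.findIdx?_eq_some_iff_getElem.1 h
  exact ⟨hj, by simpa using hp⟩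

theorem tinColor_inr_eq_some {v : W} {j : ℕ} (h : tinColor F (.inr v) = some j) :
    ∃ hj : j < F.length, F[j].2 = v := by
  obtain ⟨hj, hp, -⟩ := List.findIdx?_eq_some_iff_getElem.1 h
  exact ⟨hj, by simpa using hp⟩

theorem tinColor_inl_ne_none {u : V} (hu : u ∈ F.map Prod.fst) : tinColor F (.inl u) ≠ none := by
  simpa [tinColor, List.findIdx?_eq_none_iff] using hu

theorem eq_of_tinRel_inl_of_mem {u u' : V} (hu : u ∈ F.map Prod.fst)
    (h : tinRel G H F (.inl u') (.inl u)) : u' = u := by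
  obtain ⟨j, hj⟩ := Option.ne_none_iff_exists'.1 (tinColor_inl_ne_none hu)
  obtain ⟨_, rfl⟩ := tinColor_inl_eq_some hj
  obtain ⟨_, rfl⟩ := tinColor_inl_eq_some ((h 0).trans hj)
  rfl

theorem eq_of_tinRel_cons {u : V} {v y : W} (h : tinRel G H ((u, v) :: F) (.inl u) (.inr y)) :
    y = v := by
  have h0 : tinColor ((u, v) :: F) (.inr y) = some 0 :=
    (h 0).symm.trans (by simp [tinColor, List.findIdx?_cons])
  obtain ⟨_, hy⟩ := tinColor_inr_eq_some h0
  exact hy.symm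

theorem validRun_append_singleton_iff {p : V × W} :
    ValidRun G H (F ++ [p]) ↔ ValidRun G H F ∧ ValidStep G H F p := by
  constructor
  · intro h
    refine ⟨fun j => ?_, ?_⟩
    · simpa [List.take_append_of_le_length j.2.le, List.getElem_append_left j.2] using
        h ⟨j, by simp⟩
    · simpa using h ⟨F.length, by simp⟩
  · rintro ⟨hF, hp⟩ ⟨j, hj⟩
    obtain hj | rfl := Nat.lt_succ_iff_lt_or_eq.1 (by simpa using hj)
    · simpa [List.take_append_of_le_length hj.le, List.getElem_append_left hj] using hF ⟨j, hj⟩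
    · simpa using hp

theorem ValidStep.fst_notMem_map_fst {p : V × W} (hp : ValidStep G H F p) :
    p.1 ∉ F.map Prod.fst := by
  intro hmem
  have hsub : {u' | tinRel G H F (.inl u') (.inl p.1)} ⊆ {p.1} :=
    fun u' hu' => eq_of_tinRel_inl_of_mem hmem hu'
  have := Set.ncard_le_ncard hsub
  simp only [Set.ncard_singleton] at this
  have := hp.2.2.1
  omega

theorem ValidRun.nodup_map_fst (hF : ValidRun G H F) : (F.map Prod.fst).Nodup := by
  induction F using List.reverseRecOn with
  | nil => simp
  | append_singleton F p ih =>
    obtain ⟨hF, hp⟩ := validRun_append_singleton_iff.1 hF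
    rw [List.map_append, List.map_singleton, ← List.concat_eq_append]
    exact (ih hF).concat hp.fst_notMem_map_fst

theorem ValidRun.length_le_card [Fintype V] (hF : ValidRun G H F) :
    F.length ≤ Fintype.card V := by
  simpa using hF.nodup_map_fst.length_le_card

theorem validStep_of_tinRel {u : V} {v : W} (hI : tinIndist G H F)
    (huv : tinRel G H F (.inl u) (.inr v))
    (hu : 2 ≤ {u' | tinRel G H F (.inl u') (.inl u)}.ncard) : ValidStep G H F (u, v) := by
  refine ⟨hI, huv, hu, ?_⟩
  simp only [(tinRel_equivalence G H F).rel_congr_right ((tinRel_equivalence G H F).symm huv)]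
  rwa [← hI]

theorem exists_tinRel_inr [Finite V] (hI : tinIndist G H F) (u : V) :
    ∃ v, tinRel G H F (.inl u) (.inr v) := by
  have hpos : 0 < {u' | tinRel G H F (.inl u') (.inl u)}.ncard :=
    (Set.ncard_pos (Set.toFinite _)).2 ⟨u, (tinRel_equivalence G H F).refl _⟩
  rw [hI] at hpos
  obtain ⟨v, hv⟩ := Set.nonempty_of_ncard_ne_zero hpos.ne'
  exact ⟨v, (tinRel_equivalence G H F).symm hv⟩

theorem exists_tinRel_inl [Finite W] (hI : tinIndist G H F) (v : W) :
    ∃ u, tinRel G H F (.inl u) (.inr v) := by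
  have hpos : 0 < {v' | tinRel G H F (.inr v') (.inr v)}.ncard :=
    (Set.ncard_pos (Set.toFinite _)).2 ⟨v, (tinRel_equivalence G H F).refl _⟩
  rw [← hI] at hpos
  exact Set.nonempty_of_ncard_ne_zero hpos.ne'

theorem exists_validStep [Finite V] [Finite W] (hI : tinIndist G H F)
    (hS : ¬ AllSingletons G H F) : ∃ p, ValidStep G H F p := by
  have hr := tinRel_equivalence G H F
  obtain ⟨x, hx⟩ : ∃ x, 2 ≤ {u | tinRel G H F (.inl u) x}.ncard := by
    simp only [AllSingletons, not_and_or, not_forall] at hS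
    rcases hS with ⟨u, u', h, hne⟩ | ⟨v, v', h, hne⟩
    · exact ⟨.inl u', (Set.one_lt_ncard_iff (Set.toFinite _)).2 ⟨u, u', h, hr.refl _, hne⟩⟩
    · refine ⟨.inr v', ?_⟩
      rw [hI]
      exact (Set.one_lt_ncard_iff (Set.toFinite _)).2 ⟨v, v', h, hr.refl _, hne⟩
  obtain ⟨u, hu⟩ : {u | tinRel G H F (.inl u) x}.Nonempty :=
    Set.nonempty_of_ncard_ne_zero (by omega)
  obtain ⟨v, hv⟩ := exists_tinRel_inr hI u
  refine ⟨(u, v), validStep_of_tinRel hI hv ?_⟩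
  simpa only [hr.rel_congr_right hu] using hx

theorem exists_terminal_extension [Fintype V] [Finite W] {F : List (V × W)}
    (hF : ValidRun G H F) :
    ∃ F', ValidRun G H (F ++ F') ∧ TinTerminal G H (F ++ F') := by
  by_cases hT : TinTerminal G H F
  · exact ⟨[], by simpa using hF, by simpa using hT⟩
  simp only [TinTerminal, not_or, not_not] at hT
  obtain ⟨p, hp⟩ := exists_validStep hT.1 hT.2
  have hFp := validRun_append_singleton_iff.2 ⟨hF, hp⟩
  have hlen := hFp.length_le_card
  obtain ⟨F', hF', hT'⟩ := exists_terminal_extension hFp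
  exact ⟨p :: F', by simpa using hF', by simpa using hT'⟩
termination_by Fintype.card V - F.length
decreasing_by simp only [List.length_append, List.length_singleton] at hlen ⊢; omega

theorem exists_iso_of_tinOutputIso [Finite V] [Finite W] (h : TinOutputIso G H F) :
    ∃ φ : G ≃g H, ∀ a, tinRel G H F (.inl a) (.inr (φ a)) := by
  obtain ⟨hI, ⟨hV, hW⟩, hadj⟩ := h
  have hr := tinRel_equivalence G H F
  choose σ hσ using exists_tinRel_inr hI
  have hbij : Function.Bijective σ := by
    refine ⟨fun a a' h => hV a a' (hr.trans (hσ a) (h ▸ hr.symm (hσ a'))), fun b => ?_⟩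
    obtain ⟨a, ha⟩ := exists_tinRel_inl hI b
    exact ⟨a, hW _ _ (hr.trans (hr.symm (hσ a)) ha)⟩
  exact ⟨⟨Equiv.ofBijective σ hbij, fun {a b} => (hadj a b (σ a) (σ b) (hσ a) (hσ b)).symm⟩, hσ⟩

theorem tinRel_nil_inl_inr (a : V) : tinRel G G [] (.inl a) (.inr a) :=
  stableRel_apply_self SimpleGraph.Iso.sumComm (by simp [tinColor_nil]) (.inl a)

theorem tinRel_nil_inl_iff {a b : V} :
    tinRel G G [] (.inl a) (.inl b) ↔ stableRel G (fun _ => (0 : ℕ)) a b := by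
  have hc : ∀ i, crRel G (tinColor ([] : List (V × V)) ∘ Sum.inl) i = crRel G (fun _ => 0) i :=
    crRel_congr_coloring fun x y => by simp [tinColor_nil]
  rw [tinRel, stableRel_sum_inl_iff]
  simp only [stableRel, hc]

theorem tinIndist_nil_self : tinIndist G G [] := fun w => by
  simp only [(tinRel_equivalence G G []).rel_congr_left (tinRel_nil_inl_inr _)]

theorem validStep_nil_self [Finite V] {u v : V} (huv : stableRel G (fun _ => (0 : ℕ)) u v)
    (hne : u ≠ v) : ValidStep G G [] (u, v) := by
  have hr := tinRel_equivalence G G []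
  have huv' := tinRel_nil_inl_iff.2 huv
  exact validStep_of_tinRel tinIndist_nil_self (hr.trans huv' (tinRel_nil_inl_inr v))
    ((Set.one_lt_ncard_iff (Set.toFinite _)).2 ⟨u, v, hr.refl _, hr.symm huv', hne⟩)

end Tinhofer

theorem tinhofer_refinable {V : Type} [Fintype V] (G : SimpleGraph V)
    (h : Tinhofer G) : Refinable G := by
  intro u v
  constructor
  · intro huv
    obtain rfl | hne := eq_or_ne u v
    · exact ⟨1, fun _ _ => Iff.rfl, rfl⟩
    have hrun : ValidRun G G ([] ++ [(u, v)]) :=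
      validRun_append_singleton_iff.2 ⟨fun j => j.elim0, validStep_nil_self huv hne⟩
    obtain ⟨F, hF, hT⟩ := exists_terminal_extension hrun
    obtain ⟨φ, hφ⟩ := exists_iso_of_tinOutputIso ((h V inferInstance G _ hF hT).2 ⟨.refl⟩)
    exact ⟨φ.toEquiv, fun _ _ => φ.map_adj_iff, eq_of_tinRel_cons (hφ u)⟩
  · rintro ⟨σ, hσ, rfl⟩
    exact stableRel_apply_self ⟨σ, hσ _ _⟩ (fun _ => rfl) u

end ColorRef
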